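/- Let n ≥ 1. Then the sum of 2^(n − c(π)) over all permutations π of Fin n whose number of cycles c(π) is even equals (n−1)·(2n−3)!!, and the sum of 2^(n − c(π)) over all permutations π of Fin n whose number of cycles c(π) is odd equals n·(2n−3)!!. -/
import Mathlib


open Finset Nat

/-- The orbit (cycle) of `i` under the permutation `π`, as a finset. -/
def cycleOrbit {n : ℕ} (π : Equiv.Perm (Fin n)) (i : Fin n) : Finset (Fin n) :=
  Finset.univ.filter fun j => π.SameCycle i j

/-- The number of cycles (orbits, counting fixed points) of a permutation of `Fin n`. -/
def cycleCount {n : ℕ} (π : Equiv.Perm (Fin n)) : ℕ :=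
  (Finset.univ.image fun i => cycleOrbit π i).card

open Equiv Equiv.Perm

lemma cycleOrbit_eq_iff {n : ℕ} (f : Equiv.Perm (Fin n)) (a b : Fin n) :
    cycleOrbit f a = cycleOrbit f b ↔ f.SameCycle a b := by
  constructor
  · intro h
    have hb : b ∈ cycleOrbit f b := Finset.mem_filter.2 ⟨mem_univ _, SameCycle.refl _ _⟩
    rw [← h] at hb
    exact (Finset.mem_filter.1 hb).2
  · intro h
    ext x
    simp only [cycleOrbit, Finset.mem_filter, Finset.mem_univ, true_and]
    exact ⟨h.symm.trans, h.trans⟩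

lemma cycleCount_le {n : ℕ} (σ : Equiv.Perm (Fin n)) : cycleCount σ ≤ n :=
  Finset.card_image_le.trans (by simp)

lemma apply_succ_cases {n : ℕ} (p : Fin (n+1)) (σ : Equiv.Perm (Fin n)) (i : Fin n) :
    Equiv.Perm.decomposeFin.symm (p, σ) i.succ = (σ i).succ ∨
      (Equiv.Perm.decomposeFin.symm (p, σ) i.succ = 0 ∧ (σ i).succ = p) := by
  rw [Equiv.Perm.decomposeFin_symm_apply_succ]
  by_cases h : (σ i).succ = p
  · exact Or.inr ⟨by rw [h, Equiv.swap_apply_right], h⟩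
  · left
    rw [Equiv.swap_apply_of_ne_of_ne (Fin.succ_ne_zero _) h]

lemma sc_step {n : ℕ} (p : Fin (n+1)) (σ : Equiv.Perm (Fin n)) (i : Fin n) :
    (Equiv.Perm.decomposeFin.symm (p, σ)).SameCycle i.succ (σ i).succ := by
  rcases apply_succ_cases p σ i with h | ⟨h0, hp⟩
  · exact ⟨1, by simpa using h⟩
  · have h1 : (Equiv.Perm.decomposeFin.symm (p, σ)).SameCycle i.succ 0 := ⟨1, by simpa using h0⟩
    have h2 : (Equiv.Perm.decomposeFin.symm (p, σ)).SameCycle 0 (σ i).succ :=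
      ⟨1, by simpa [Equiv.Perm.decomposeFin_symm_apply_zero] using hp.symm⟩
    exact h1.trans h2

lemma sc_pow {n : ℕ} (p : Fin (n+1)) (σ : Equiv.Perm (Fin n)) (k : ℕ) :
    ∀ i : Fin n, (Equiv.Perm.decomposeFin.symm (p, σ)).SameCycle i.succ ((σ ^ k) i).succ := by
  induction k with
  | zero => intro i; exact Equiv.Perm.SameCycle.refl _ _
  | succ k ih =>
    intro i
    have h2 : (σ ^ (k+1)) i = (σ ^ k) (σ i) := by rw [pow_succ, Equiv.Perm.mul_apply]
    rw [h2]
    exact (sc_step p σ i).trans (ih (σ i))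

lemma sc_fwd {n : ℕ} (p : Fin (n+1)) (σ : Equiv.Perm (Fin n)) {i j : Fin n}
    (h : σ.SameCycle i j) :
    (Equiv.Perm.decomposeFin.symm (p, σ)).SameCycle i.succ j.succ := by
  obtain ⟨k, -, hk⟩ := h.exists_pow_eq'
  subst hk
  exact sc_pow p σ k i

lemma sc_bwd_aux {n : ℕ} (p : Fin (n+1)) (σ : Equiv.Perm (Fin n)) :
    ∀ k : ℕ, ∀ i j : Fin n, ((Equiv.Perm.decomposeFin.symm (p, σ)) ^ k) i.succ = j.succ →
      σ.SameCycle i j := by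
  intro k
  induction k using Nat.strong_induction_on with
  | _ k ih =>
    intro i j hk
    match k, hk with
    | 0, hk =>
      simp only [pow_zero, Equiv.Perm.coe_one, id_eq] at hk
      exact (Fin.succ_injective _ hk) ▸ Equiv.Perm.SameCycle.refl _ _
    | (k+1), hk =>
      rw [pow_succ, Equiv.Perm.mul_apply] at hk
      rcases apply_succ_cases p σ i with h | ⟨h0, hp⟩
      · rw [h] at hk
        exact Equiv.Perm.sameCycle_apply_left.mp (ih k (by omega) (σ i) j hk)
      · rw [h0] at hk
        match k, hk with
        | 0, hk =>
          simp only [pow_zero, Equiv.Perm.coe_one, id_eq] at hk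
          exact absurd hk.symm (Fin.succ_ne_zero j)
        | (k'+1), hk =>
          rw [pow_succ, Equiv.Perm.mul_apply,
            Equiv.Perm.decomposeFin_symm_apply_zero] at hk
          refine Equiv.Perm.sameCycle_apply_left.mp (ih k' (by omega) (σ i) j ?_)
          rw [hp]; exact hk

lemma sc_succ_iff {n : ℕ} (p : Fin (n+1)) (σ : Equiv.Perm (Fin n)) (i j : Fin n) :
    (Equiv.Perm.decomposeFin.symm (p, σ)).SameCycle i.succ j.succ ↔ σ.SameCycle i j := by
  refine ⟨fun h => ?_, sc_fwd p σ⟩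
  obtain ⟨k, -, hk⟩ := h.exists_pow_eq'
  exact sc_bwd_aux p σ k i j hk

lemma card_image_congr {α β γ : Type*} [DecidableEq β] [DecidableEq γ]
    (s : Finset α) (f : α → β) (g : α → γ)
    (h : ∀ i ∈ s, ∀ j ∈ s, (f i = f j ↔ g i = g j)) :
    (s.image f).card = (s.image g).card := by
  classical
  induction s using Finset.induction with
  | empty => simp
  | @insert a s ha ih =>
    rw [Finset.image_insert, Finset.image_insert]
    have hmem : f a ∈ s.image f ↔ g a ∈ s.image g := by
      simp only [Finset.mem_image]
      constructor
      · rintro ⟨x, hx, hfx⟩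
        exact ⟨x, hx, ((h x (Finset.mem_insert_of_mem hx) a (Finset.mem_insert_self a s)).mp
          hfx)⟩
      · rintro ⟨x, hx, hgx⟩
        exact ⟨x, hx, ((h x (Finset.mem_insert_of_mem hx) a (Finset.mem_insert_self a s)).mpr
          hgx)⟩
    have ih' := ih fun i hi j hj =>
      h i (Finset.mem_insert_of_mem hi) j (Finset.mem_insert_of_mem hj)
    by_cases hf : f a ∈ s.image f
    · rw [Finset.insert_eq_self.mpr hf, Finset.insert_eq_self.mpr (hmem.mp hf), ih']
    · rw [Finset.card_insert_of_notMem hf,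
        Finset.card_insert_of_notMem (fun hg => hf (hmem.mpr hg)), ih']

lemma cycleCount_decomposeFin {n : ℕ} (p : Fin (n+1)) (σ : Equiv.Perm (Fin n)) :
    cycleCount (Equiv.Perm.decomposeFin.symm (p, σ)) =
      cycleCount σ + if p = 0 then 1 else 0 := by
  classical
  set τ := Equiv.Perm.decomposeFin.symm (p, σ) with hτ
  set S := Finset.univ.image fun i : Fin n => cycleOrbit τ i.succ with hSdef
  have himg : (Finset.univ.image fun i : Fin (n+1) => cycleOrbit τ i) =
      insert (cycleOrbit τ 0) S := by
    rw [hSdef, Fin.univ_succ, Finset.cons_eq_insert, Finset.image_insert]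
    congr 1
    rw [Finset.map_eq_image, Finset.image_image]
    rfl
  have hS : S.card = cycleCount σ := by
    apply card_image_congr
    intro i _ j _
    rw [cycleOrbit_eq_iff, cycleOrbit_eq_iff, sc_succ_iff]
  have hmain : cycleCount τ = (insert (cycleOrbit τ 0) S).card := by
    unfold cycleCount
    rw [himg]
  rw [hmain]
  by_cases hp : p = 0
  · have hnot : cycleOrbit τ 0 ∉ S := by
      intro hmem
      obtain ⟨i, -, hi⟩ := Finset.mem_image.mp hmem
      have hsc := (cycleOrbit_eq_iff τ i.succ 0).mp hi
      have h0 : Function.IsFixedPt τ 0 := by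
        show τ 0 = 0
        rw [hτ, Equiv.Perm.decomposeFin_symm_apply_zero, hp]
      exact Fin.succ_ne_zero i (hsc.symm.eq_of_left h0).symm
    rw [Finset.card_insert_of_notMem hnot, hS, if_pos hp]
  · have hmem : cycleOrbit τ 0 ∈ S := by
      obtain ⟨q, hq⟩ : ∃ q : Fin n, p = q.succ := ⟨p.pred hp, (Fin.succ_pred p hp).symm⟩
      refine Finset.mem_image.mpr ⟨q, Finset.mem_univ q, ?_⟩
      rw [cycleOrbit_eq_iff]
      have hsc : τ.SameCycle 0 q.succ :=
        ⟨1, by simp [hτ, Equiv.Perm.decomposeFin_symm_apply_zero, hq]⟩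
      exact hsc.symm
    rw [Finset.insert_eq_self.mpr hmem, hS, if_neg hp, add_zero]

lemma step_sum (n : ℕ) (P : ℕ → Prop) [DecidablePred P] :
    (∑ π : Equiv.Perm (Fin (n+1)),
        if P (cycleCount π) then 2 ^ ((n+1) - cycleCount π) else 0)
      = (∑ σ : Equiv.Perm (Fin n),
          if P (cycleCount σ + 1) then 2 ^ (n - cycleCount σ) else 0)
        + n * ∑ σ : Equiv.Perm (Fin n),
            if P (cycleCount σ) then 2 ^ (n - cycleCount σ) * 2 else 0 := by
  classical
  rw [← Equiv.sum_comp (Equiv.Perm.decomposeFin (n := n)).symm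
      (fun π => if P (cycleCount π) then 2 ^ ((n+1) - cycleCount π) else 0),
    Fintype.sum_prod_type, Fin.sum_univ_succ]
  congr 1
  · apply Finset.sum_congr rfl
    intro σ _
    rw [cycleCount_decomposeFin, if_pos rfl, Nat.succ_sub_succ]
  · have hconst : ∀ q : Fin n,
        (∑ σ : Equiv.Perm (Fin n),
          if P (cycleCount (Equiv.Perm.decomposeFin.symm (q.succ, σ)))
          then 2 ^ ((n+1) - cycleCount (Equiv.Perm.decomposeFin.symm (q.succ, σ))) else 0)
        = ∑ σ : Equiv.Perm (Fin n),
            if P (cycleCount σ) then 2 ^ (n - cycleCount σ) * 2 else 0 := by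
      intro q
      apply Finset.sum_congr rfl
      intro σ _
      rw [cycleCount_decomposeFin, if_neg (Fin.succ_ne_zero q), add_zero,
        Nat.succ_sub (cycleCount_le σ), pow_succ]
    calc (∑ q : Fin n, ∑ σ : Equiv.Perm (Fin n),
          if P (cycleCount (Equiv.Perm.decomposeFin.symm (q.succ, σ)))
          then 2 ^ ((n+1) - cycleCount (Equiv.Perm.decomposeFin.symm (q.succ, σ))) else 0)
        = ∑ _q : Fin n, ∑ σ : Equiv.Perm (Fin n),
            if P (cycleCount σ) then 2 ^ (n - cycleCount σ) * 2 else 0 :=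
          Finset.sum_congr rfl fun q _ => hconst q
      _ = n * ∑ σ : Equiv.Perm (Fin n),
            if P (cycleCount σ) then 2 ^ (n - cycleCount σ) * 2 else 0 := by
          rw [Finset.sum_const, Finset.card_univ, Fintype.card_fin, smul_eq_mul]

lemma cycleCount_fin_one (π : Equiv.Perm (Fin 1)) : cycleCount π = 1 := by
  unfold cycleCount
  have h : (Finset.univ : Finset (Fin 1)) = {0} := by decide
  rw [h, Finset.image_singleton, Finset.card_singleton]

lemma univ_perm_one : (Finset.univ : Finset (Equiv.Perm (Fin 1))) = {1} := by
  refine Finset.eq_singleton_iff_unique_mem.mpr ⟨Finset.mem_univ 1, fun x _ => ?_⟩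
  exact Equiv.ext fun i => Subsingleton.elim _ _

lemma dfac_step (n : ℕ) (hn : 1 ≤ n) : (2*(n+1)-3)‼ = (2*n-1) * (2*n-3)‼ := by
  match n, hn with
  | 1, _ => decide
  | (m+2), _ =>
    have h1 : 2*(m+2+1)-3 = (2*m+1)+2 := by omega
    have h2 : 2*(m+2)-1 = (2*m+1)+2 := by omega
    have h3 : 2*(m+2)-3 = 2*m+1 := by omega
    rw [h1, h2, h3, Nat.doubleFactorial_add_two]

lemma key (n : ℕ) (hn : 1 ≤ n) :
    (∑ π : Equiv.Perm (Fin n),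
        if Even (cycleCount π) then 2 ^ (n - cycleCount π) else 0) = (n-1) * (2*n-3)‼ ∧
    (∑ π : Equiv.Perm (Fin n),
        if Odd (cycleCount π) then 2 ^ (n - cycleCount π) else 0) = n * (2*n-3)‼ := by
  induction n, hn using Nat.le_induction with
  | base =>
    constructor <;>
      simp [univ_perm_one, Finset.sum_singleton, cycleCount_fin_one, Nat.doubleFactorial]
  | succ n hn ih =>
    obtain ⟨hE, hO⟩ := ih
    obtain ⟨m, rfl⟩ : ∃ m, n = m + 1 := ⟨n - 1, by omega⟩
    have hpow2 : ∀ (Q : ℕ → Prop) (_ : DecidablePred Q),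
        (∑ σ : Equiv.Perm (Fin (m+1)),
            if Q (cycleCount σ) then 2 ^ ((m+1) - cycleCount σ) * 2 else 0)
        = (∑ σ : Equiv.Perm (Fin (m+1)),
            if Q (cycleCount σ) then 2 ^ ((m+1) - cycleCount σ) else 0) * 2 := by
      intro Q _
      rw [Finset.sum_mul]
      apply Finset.sum_congr rfl
      intro σ _
      split <;> simp
    have h2 : m+1-1 = m := by omega
    have h3 : m+1+1-1 = m+1 := by omega
    have h4 : 2*(m+1)-1 = 2*m+1 := by omega
    constructor
    · rw [step_sum (m+1) Even]
      have h1 : (∑ σ : Equiv.Perm (Fin (m+1)),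
          if Even (cycleCount σ + 1) then 2 ^ ((m+1) - cycleCount σ) else 0)
          = ∑ σ : Equiv.Perm (Fin (m+1)),
            if Odd (cycleCount σ) then 2 ^ ((m+1) - cycleCount σ) else 0 := by
        apply Finset.sum_congr rfl
        intro σ _
        simp only [Nat.even_add_one, Nat.not_even_iff_odd]
      rw [h1, hpow2 Even inferInstance, hE, hO, dfac_step (m+1) hn, h2, h3, h4]
      ring
    · rw [step_sum (m+1) Odd]
      have h1 : (∑ σ : Equiv.Perm (Fin (m+1)),
          if Odd (cycleCount σ + 1) then 2 ^ ((m+1) - cycleCount σ) else 0)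
          = ∑ σ : Equiv.Perm (Fin (m+1)),
            if Even (cycleCount σ) then 2 ^ ((m+1) - cycleCount σ) else 0 := by
        apply Finset.sum_congr rfl
        intro σ _
        simp only [Nat.odd_add_one, Nat.not_odd_iff_even]
      rw [h1, hpow2 Odd inferInstance, hE, hO, dfac_step (m+1) hn, h2, h4]
      ring

theorem stmt_9 (n : ℕ) (hn : 1 ≤ n) :
    (∑ π ∈ Finset.univ.filter (fun π : Equiv.Perm (Fin n) => Even (cycleCount π)),
        2 ^ (n - cycleCount π) = (n - 1) * (2 * n - 3)‼) ∧
    (∑ π ∈ Finset.univ.filter (fun π : Equiv.Perm (Fin n) => Odd (cycleCount π)),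
        2 ^ (n - cycleCount π) = n * (2 * n - 3)‼) := by
  rw [Finset.sum_filter, Finset.sum_filter]
  exact key n hn
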